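/- arXiv:1103.4591 — 3 statements merged into one kernel-verified Lean document; each statement's English description precedes it below -/
import Mathlib

section
/- Let $e$ be a finite nonnegative Borel measure on $[0,\infty)$, and suppose there exist $C>0$, $\gamma > 2$ such that $\int_{[0,\mu]}\mathrm{d}e(\lambda) \le C\mu^\gamma$ for all $\mu \in (0,1]$, and that $e$ is supported in $[0,2]$. Then there is a constant $C'$ such that for all $t \ge 1$, $\int \frac{1-e^{-\lambda t}}{\lambda^2 t}\,\mathrm{d}e(\lambda) \le C' t^{-1}$. -/
/-!
On dyadic shells `(2^{-(k+1)}, 2^{-k}]` the weight `λ⁻²` is at most `4^{k+1}` while the small-ball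
bound gives mass at most `C 2^{-kγ}`, so `γ > 2` makes the shell contributions a convergent
geometric series and `∫ λ⁻² de` is finite. Since `1 - e^{-λt} ≤ 1`, the integrand is at most
`λ⁻² t⁻¹`, and `C' = ∫ λ⁻² de` works.
-/

open MeasureTheory Set

lemma Ioc_zero_one_subset_iUnion_Ioc_inv_two_pow :
    Ioc (0 : ℝ) 1 ⊆ ⋃ k : ℕ, Ioc ((2⁻¹ : ℝ) ^ (k + 1)) (2⁻¹ ^ k) := fun _ hl =>
  mem_iUnion.2 (exists_nat_pow_near_of_lt_one hl.1 hl.2 (by norm_num) (by norm_num))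

section InvPow

variable (e : Measure ℝ) [IsFiniteMeasure e] {C γ : ℝ}

lemma setLIntegral_Ioc_inv_two_pow_le
    (hbound : ∀ μ : ℝ, 0 < μ → μ ≤ 1 → (e (Icc 0 μ)).toReal ≤ C * μ ^ γ) (n k : ℕ) :
    ∫⁻ l in Ioc ((2⁻¹ : ℝ) ^ (k + 1)) (2⁻¹ ^ k), ENNReal.ofReal (l⁻¹ ^ n) ∂e
      ≤ ENNReal.ofReal (2 ^ n * C) * ENNReal.ofReal (2 ^ n / 2 ^ γ) ^ k := by
  have hlow : (0 : ℝ) < 2⁻¹ ^ (k + 1) := by positivity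
  have hshell :
      e (Ioc ((2⁻¹ : ℝ) ^ (k + 1)) (2⁻¹ ^ k)) ≤ ENNReal.ofReal (C * ((2 ^ γ)⁻¹) ^ k) := by
    calc e (Ioc ((2⁻¹ : ℝ) ^ (k + 1)) (2⁻¹ ^ k))
        ≤ e (Icc 0 (2⁻¹ ^ k)) := measure_mono fun l hl => ⟨(hlow.trans hl.1).le, hl.2⟩
      _ = ENNReal.ofReal (e (Icc 0 (2⁻¹ ^ k))).toReal :=
        (ENNReal.ofReal_toReal (measure_ne_top e _)).symm
      _ ≤ ENNReal.ofReal (C * ((2 ^ γ)⁻¹) ^ k) := by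
        refine ENNReal.ofReal_le_ofReal ?_
        rw [← Real.inv_rpow (by norm_num), Real.rpow_pow_comm (by norm_num)]
        exact hbound _ (by positivity) (pow_le_one₀ (by norm_num) (by norm_num))
  calc ∫⁻ l in Ioc ((2⁻¹ : ℝ) ^ (k + 1)) (2⁻¹ ^ k), ENNReal.ofReal (l⁻¹ ^ n) ∂e
      ≤ ∫⁻ _ in Ioc ((2⁻¹ : ℝ) ^ (k + 1)) (2⁻¹ ^ k), ENNReal.ofReal ((2 ^ (k + 1)) ^ n) ∂e := by
        refine setLIntegral_mono' measurableSet_Ioc fun l hl => ENNReal.ofReal_le_ofReal ?_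
        have : l⁻¹ ≤ 2 ^ (k + 1) := by simpa [inv_pow] using inv_anti₀ hlow hl.1.le
        gcongr
        exact inv_nonneg.2 (hlow.trans hl.1).le
    _ = ENNReal.ofReal ((2 ^ (k + 1)) ^ n) * e (Ioc ((2⁻¹ : ℝ) ^ (k + 1)) (2⁻¹ ^ k)) :=
        setLIntegral_const _ _
    _ ≤ ENNReal.ofReal ((2 ^ (k + 1)) ^ n) * ENNReal.ofReal (C * ((2 ^ γ)⁻¹) ^ k) := by
        gcongr
    _ = ENNReal.ofReal (2 ^ n * C) * ENNReal.ofReal (2 ^ n / 2 ^ γ) ^ k := by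
        rw [← ENNReal.ofReal_mul (by positivity), ← ENNReal.ofReal_pow (by positivity),
          ← ENNReal.ofReal_mul' (by positivity)]
        congr 1
        ring

lemma lintegral_Ioc_zero_one_inv_pow_lt_top
    (hbound : ∀ μ : ℝ, 0 < μ → μ ≤ 1 → (e (Icc 0 μ)).toReal ≤ C * μ ^ γ)
    {n : ℕ} (hn : (n : ℝ) < γ) :
    ∫⁻ l in Ioc (0 : ℝ) 1, ENNReal.ofReal (l⁻¹ ^ n) ∂e < ⊤ := by
  have hratio : ENNReal.ofReal (2 ^ n / 2 ^ γ) < 1 := by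
    rw [ENNReal.ofReal_lt_one, div_lt_one (by positivity), ← Real.rpow_natCast]
    exact Real.rpow_lt_rpow_of_exponent_lt (by norm_num) hn
  calc ∫⁻ l in Ioc (0 : ℝ) 1, ENNReal.ofReal (l⁻¹ ^ n) ∂e
      ≤ ∫⁻ l in ⋃ k : ℕ, Ioc ((2⁻¹ : ℝ) ^ (k + 1)) (2⁻¹ ^ k), ENNReal.ofReal (l⁻¹ ^ n) ∂e :=
        lintegral_mono_set Ioc_zero_one_subset_iUnion_Ioc_inv_two_pow
    _ ≤ ∑' k : ℕ, ∫⁻ l in Ioc ((2⁻¹ : ℝ) ^ (k + 1)) (2⁻¹ ^ k), ENNReal.ofReal (l⁻¹ ^ n) ∂e :=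
        lintegral_iUnion_le _ _
    _ ≤ ∑' k : ℕ, ENNReal.ofReal (2 ^ n * C) * ENNReal.ofReal (2 ^ n / 2 ^ γ) ^ k :=
        ENNReal.tsum_le_tsum (setLIntegral_Ioc_inv_two_pow_le e hbound n)
    _ < ⊤ := by
        rw [ENNReal.tsum_mul_left, ENNReal.tsum_geometric]
        exact ENNReal.mul_lt_top ENNReal.ofReal_lt_top
          (ENNReal.inv_lt_top.2 (tsub_pos_of_lt hratio))

lemma lintegral_Ioi_one_inv_pow_lt_top (n : ℕ) :
    ∫⁻ l in Ioi (1 : ℝ), ENNReal.ofReal (l⁻¹ ^ n) ∂e < ⊤ := by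
  calc ∫⁻ l in Ioi (1 : ℝ), ENNReal.ofReal (l⁻¹ ^ n) ∂e
      ≤ ∫⁻ _ in Ioi (1 : ℝ), 1 ∂e := setLIntegral_mono' measurableSet_Ioi fun l hl =>
        ENNReal.ofReal_le_one.2
          (pow_le_one₀ (inv_pos.2 (one_pos.trans hl)).le (inv_le_one_of_one_le₀ hl.le))
    _ < ⊤ := by simp [measure_lt_top]

lemma integrableOn_Ioi_zero_inv_pow
    (hbound : ∀ μ : ℝ, 0 < μ → μ ≤ 1 → (e (Icc 0 μ)).toReal ≤ C * μ ^ γ)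
    {n : ℕ} (hn : (n : ℝ) < γ) :
    IntegrableOn (fun l : ℝ => l⁻¹ ^ n) (Ioi 0) e := by
  refine ⟨(measurable_inv.pow_const n).aestronglyMeasurable, ?_⟩
  rw [hasFiniteIntegral_iff_ofReal ((ae_restrict_iff' measurableSet_Ioi).2
      (ae_of_all _ fun l hl => pow_nonneg (inv_nonneg.2 (le_of_lt hl)) n)),
    ← Ioc_union_Ioi_eq_Ioi zero_le_one]
  exact (lintegral_union_le _ _ _).trans_lt (ENNReal.add_lt_top.2
    ⟨lintegral_Ioc_zero_one_inv_pow_lt_top e hbound hn, lintegral_Ioi_one_inv_pow_lt_top e n⟩)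

end InvPow

lemma one_sub_exp_neg_mul_div_le {l t : ℝ} (hl : 0 < l) (ht : 0 < t) :
    (1 - Real.exp (-(l * t))) / (l ^ 2 * t) ≤ l⁻¹ ^ 2 * t⁻¹ := by
  rw [inv_pow, ← mul_inv, ← one_div]
  gcongr
  linarith [Real.exp_pos (-(l * t))]

lemma one_sub_exp_neg_mul_div_nonneg {l t : ℝ} (hl : 0 < l) (ht : 0 < t) :
    0 ≤ (1 - Real.exp (-(l * t))) / (l ^ 2 * t) := by
  have : Real.exp (-(l * t)) ≤ 1 := Real.exp_le_one_iff.2 (by nlinarith)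
  exact div_nonneg (by linarith) (by positivity)

theorem stmt_4_general (e : Measure ℝ) [IsFiniteMeasure e] (C γ : ℝ) (hγ : 2 < γ)
    (hbound : ∀ μ : ℝ, 0 < μ → μ ≤ 1 → (e (Icc 0 μ)).toReal ≤ C * μ ^ γ) :
    ∃ C' : ℝ, ∀ t : ℝ, 1 ≤ t →
      (∫ l in Ioi (0:ℝ), (1 - Real.exp (-(l * t))) / (l ^ 2 * t) ∂e) ≤ C' * t⁻¹ := by
  refine ⟨∫ l in Ioi (0:ℝ), l⁻¹ ^ 2 ∂e, fun t ht => ?_⟩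
  have ht0 : 0 < t := one_pos.trans_le ht
  rw [← integral_mul_const]
  refine integral_mono_of_nonneg ?_
    ((integrableOn_Ioi_zero_inv_pow e hbound (by exact_mod_cast hγ)).mul_const _) ?_
  · exact (ae_restrict_iff' measurableSet_Ioi).2
      (ae_of_all _ fun l hl => one_sub_exp_neg_mul_div_nonneg hl ht0)
  · exact (ae_restrict_iff' measurableSet_Ioi).2
      (ae_of_all _ fun l hl => one_sub_exp_neg_mul_div_le hl ht0)

theorem stmt_4 (e : Measure ℝ) [IsFiniteMeasure e] (C γ : ℝ) (hC : 0 < C) (hγ : 2 < γ)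
    (hbound : ∀ μ : ℝ, 0 < μ → μ ≤ 1 → (e (Icc 0 μ)).toReal ≤ C * μ ^ γ)
    (hsupp : e (Ioi (2:ℝ)) = 0) (hneg : e (Iio (0:ℝ)) = 0) (h0 : e {0} = 0) :
    ∃ C' : ℝ, ∀ t : ℝ, 1 ≤ t →
      (∫ l in Ioi (0:ℝ), (1 - Real.exp (-(l * t))) / (l ^ 2 * t) ∂e) ≤ C' * t⁻¹ :=
  stmt_4_general e C γ hγ hbound
end

section
/- Let $e$ be a finite nonnegative Borel measure on $[0,2]$ with $e(\{0\})=0$, and suppose there exist $C>0$ and $\gamma \in (1,2)$ such that $\int_{(0,\mu]}\mathrm{d}e(\lambda) \le C\mu^\gamma$ for all $\mu \in (0,1]$. Then there is a constant $C'$ such that for all integers $t \ge 2$, $\int \frac{1-(1-\lambda)^t}{\lambda^2 t}\,\mathrm{d}e(\lambda) \le C' t^{1-\gamma}$. -/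
open MeasureTheory Set

/-!
On `(0, 2]` the kernel `(1 - (1 - λ)^t) / (λ² t)` is at most `min (1/λ) (2/(λ² t))`, by Bernoulli's
inequality and `|1 - λ| ≤ 1`. Cut `(0, 2]` into the dyadic shells `(2^{-k}, 2^{1-k}]`. Since the mass
bound `e (0, μ] ≤ C μ^γ` extends to all `μ > 0` with the constant `max C (e ℝ)`, the `k`-th shell
carries mass `O(2^{-kγ})`, so the integral is `O(∑ₖ min (2^k) (4^k/t) 2^{-kγ})`. Splitting this series
where `2^k ≈ t`, the head is geometric with ratio `2^{2-γ} > 1` and the tail geometric with ratio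
`2^{1-γ} < 1`; both are `O(t^{1-γ})`.
-/

noncomputable def remainderKernel (t : ℕ) (l : ℝ) : ℝ :=
  (1 - (1 - l) ^ t) / (l ^ 2 * t)

namespace remainderKernel

variable {t : ℕ} {l : ℝ}

lemma abs_one_sub_pow_le_one (hl0 : 0 ≤ l) (hl2 : l ≤ 2) : |(1 - l) ^ t| ≤ 1 := by
  rw [abs_pow]
  exact pow_le_one₀ (abs_nonneg _) (abs_le.2 ⟨by linarith, by linarith⟩)

lemma nonneg (hl0 : 0 ≤ l) (hl2 : l ≤ 2) : 0 ≤ remainderKernel t l :=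
  div_nonneg (sub_nonneg.2 ((le_abs_self _).trans (abs_one_sub_pow_le_one hl0 hl2)))
    (by positivity)

lemma le_inv (hl0 : 0 < l) (hl2 : l ≤ 2) : remainderKernel t l ≤ l⁻¹ := by
  refine div_le_of_le_mul₀ (by positivity) (inv_nonneg.2 hl0.le) ?_
  have bernoulli := one_add_mul_le_pow (a := -l) (by linarith) t
  calc 1 - (1 - l) ^ t ≤ t * l := by rw [← sub_eq_add_neg] at bernoulli; linarith
    _ = l⁻¹ * (l ^ 2 * t) := by field_simp

lemma le_two_div (hl0 : 0 ≤ l) (hl2 : l ≤ 2) : remainderKernel t l ≤ 2 / (l ^ 2 * t) :=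
  div_le_div_of_nonneg_right
    (by linarith [neg_abs_le ((1 - l) ^ t), abs_one_sub_pow_le_one (t := t) hl0 hl2])
    (by positivity)

lemma le_of_mem_dyadic {k : ℕ} (hl : l ∈ Ioc (2 / 2 ^ (k + 1)) (2 / 2 ^ k)) :
    remainderKernel t l ≤ 2 * min ((2 : ℝ) ^ k) (4 ^ k / t) := by
  have hlow : ((2 : ℝ) ^ k)⁻¹ < l :=
    (by rw [pow_succ]; field_simp : ((2 : ℝ) ^ k)⁻¹ = 2 / 2 ^ (k + 1)).trans_lt hl.1
  have hl0 : 0 < l := (inv_pos.2 (by positivity)).trans hlow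
  have hl2 : l ≤ 2 := hl.2.trans (div_le_self zero_le_two (one_le_pow₀ one_le_two))
  have hinv : l⁻¹ ≤ 2 ^ k := (inv_lt_of_inv_lt₀ (by positivity) hlow).le
  rw [mul_min_of_nonneg _ _ zero_le_two]
  refine le_min ((le_inv hl0 hl2).trans (hinv.trans (le_mul_of_one_le_left (by positivity)
    one_le_two))) ((le_two_div hl0.le hl2).trans ?_)
  have hsq : (l ^ 2)⁻¹ ≤ 4 ^ k := by
    rw [← inv_pow, show (4 : ℝ) ^ k = (2 ^ k) ^ 2 by rw [← pow_mul, mul_comm, pow_mul]; norm_num]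
    gcongr
  calc 2 / (l ^ 2 * t) = 2 * ((l ^ 2)⁻¹ / t) := by ring
    _ ≤ 2 * (4 ^ k / t) := by gcongr

end remainderKernel

lemma Ioc_zero_subset_iUnion_Ioc_div_two_pow (M : ℝ) :
    Ioc 0 M ⊆ ⋃ k : ℕ, Ioc (M / 2 ^ (k + 1)) (M / 2 ^ k) := by
  rintro x ⟨hx0, hxM⟩
  obtain ⟨k, hlow, hhigh⟩ := exists_nat_pow_near ((one_le_div hx0).2 hxM) one_lt_two
  refine mem_iUnion.2 ⟨k, ?_, ?_⟩
  · rw [div_lt_iff₀ (by positivity), mul_comm]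
    exact (div_lt_iff₀ hx0).1 hhigh
  · rw [le_div_iff₀ (by positivity), mul_comm]
    exact (le_div_iff₀ hx0).1 hlow

lemma setIntegral_Ioc_zero_le_tsum_of_dyadic {μ : Measure ℝ} {φ : ℝ → ℝ} {M : ℝ} {b m : ℕ → ℝ}
    (hb : ∀ k, 0 ≤ b k) (hm : ∀ k, 0 ≤ m k) (hsum : Summable fun k => b k * m k)
    (hφ : ∀ k, ∀ x ∈ Ioc (M / 2 ^ (k + 1)) (M / 2 ^ k), ‖φ x‖ ≤ b k)
    (hμ : ∀ k, μ (Ioc (M / 2 ^ (k + 1)) (M / 2 ^ k)) ≤ ENNReal.ofReal (m k)) :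
    ∫ x in Ioc 0 M, φ x ∂μ ≤ ∑' k, b k * m k := by
  have hshell : ∀ k, ∫⁻ x in Ioc (M / 2 ^ (k + 1)) (M / 2 ^ k), ENNReal.ofReal ‖φ x‖ ∂μ ≤
      ENNReal.ofReal (b k * m k) := fun k =>
    calc _ ≤ ∫⁻ _ in Ioc (M / 2 ^ (k + 1)) (M / 2 ^ k), ENNReal.ofReal (b k) ∂μ :=
          setLIntegral_mono measurable_const fun x hx => ENNReal.ofReal_le_ofReal (hφ k x hx)
      _ = ENNReal.ofReal (b k) * μ (Ioc (M / 2 ^ (k + 1)) (M / 2 ^ k)) := setLIntegral_const _ _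
      _ ≤ ENNReal.ofReal (b k) * ENNReal.ofReal (m k) := by gcongr; exact hμ k
      _ = ENNReal.ofReal (b k * m k) := (ENNReal.ofReal_mul (hb k)).symm
  have hlintegral : ∫⁻ x in Ioc 0 M, ENNReal.ofReal ‖φ x‖ ∂μ ≤
      ENNReal.ofReal (∑' k, b k * m k) :=
    calc _ ≤ ∫⁻ x in ⋃ k : ℕ, Ioc (M / 2 ^ (k + 1)) (M / 2 ^ k), ENNReal.ofReal ‖φ x‖ ∂μ :=
          lintegral_mono_set (Ioc_zero_subset_iUnion_Ioc_div_two_pow M)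
      _ ≤ ∑' k, ∫⁻ x in Ioc (M / 2 ^ (k + 1)) (M / 2 ^ k), ENNReal.ofReal ‖φ x‖ ∂μ :=
          lintegral_iUnion_le _ _
      _ ≤ ∑' k, ENNReal.ofReal (b k * m k) := ENNReal.tsum_le_tsum hshell
      _ = ENNReal.ofReal (∑' k, b k * m k) :=
          (ENNReal.ofReal_tsum_of_nonneg (fun k => mul_nonneg (hb k) (hm k)) hsum).symm
  calc _ ≤ ‖∫ x in Ioc 0 M, φ x ∂μ‖ := Real.le_norm_self _
    _ ≤ _ := norm_integral_le_lintegral_norm _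
    _ ≤ _ := ENNReal.toReal_le_of_le_ofReal (tsum_nonneg fun k => mul_nonneg (hb k) (hm k))
          hlintegral

lemma toReal_measure_Ioc_zero_le_max {e : Measure ℝ} [IsFiniteMeasure e] {C γ : ℝ} (hγ : 0 ≤ γ)
    (hbound : ∀ μ : ℝ, 0 < μ → μ ≤ 1 → (e (Ioc 0 μ)).toReal ≤ C * μ ^ γ) {μ : ℝ} (hμ : 0 < μ) :
    (e (Ioc 0 μ)).toReal ≤ max C (e univ).toReal * μ ^ γ := by
  rcases le_or_gt μ 1 with hμ1 | hμ1
  · exact (hbound μ hμ hμ1).trans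
      (mul_le_mul_of_nonneg_right (le_max_left _ _) (Real.rpow_nonneg hμ.le _))
  · calc (e (Ioc 0 μ)).toReal ≤ (e univ).toReal :=
          ENNReal.toReal_mono (measure_ne_top _ _) (measure_mono (subset_univ _))
      _ ≤ max C (e univ).toReal * μ ^ γ :=
          (le_max_right _ _).trans (le_mul_of_one_le_right
            (le_max_of_le_right ENNReal.toReal_nonneg) (Real.one_le_rpow hμ1.le hγ))

lemma tsum_le_of_le_geometric {a : ℕ → ℝ} {A B r s : ℝ} (K : ℕ) (ha : Summable a) (hA : 0 ≤ A)
    (hr0 : 0 ≤ r) (hr1 : r < 1) (hs : 1 < s) (hhead : ∀ k < K, a k ≤ A * s ^ k)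
    (htail : ∀ k, K ≤ k → a k ≤ B * r ^ k) :
    ∑' k, a k ≤ A * s ^ K / (s - 1) + B * r ^ K / (1 - r) := by
  rw [← ha.sum_add_tsum_nat_add K]
  refine add_le_add ?_ ?_
  · calc ∑ k ∈ Finset.range K, a k ≤ ∑ k ∈ Finset.range K, A * s ^ k :=
          Finset.sum_le_sum fun k hk => hhead k (Finset.mem_range.1 hk)
      _ = A * ((s ^ K - 1) / (s - 1)) := by rw [← Finset.mul_sum, geom_sum_eq hs.ne']
      _ ≤ A * s ^ K / (s - 1) := by
          rw [mul_div_assoc]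
          gcongr
          linarith
  · calc ∑' k, a (k + K) ≤ ∑' k, B * r ^ K * r ^ k :=
          ((summable_nat_add_iff K).2 ha).tsum_le_tsum
            (fun k => (htail (k + K) (Nat.le_add_left K k)).trans_eq (by ring))
            ((summable_geometric_of_lt_one hr0 hr1).mul_left _)
      _ = B * r ^ K / (1 - r) := by
          rw [tsum_mul_left, tsum_geometric_of_lt_one hr0 hr1, div_eq_mul_inv]

section DyadicSeries

variable {γ : ℝ}

lemma two_pow_div_rpow_pow (k : ℕ) : (2 : ℝ) ^ k / (2 ^ γ) ^ k = (2 ^ (1 - γ)) ^ k := by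
  rw [← div_pow, Real.rpow_sub two_pos, Real.rpow_one]

lemma four_pow_div_rpow_pow (k : ℕ) : (4 : ℝ) ^ k / (2 ^ γ) ^ k = (2 ^ (2 - γ)) ^ k := by
  rw [← div_pow, Real.rpow_sub two_pos, Real.rpow_two]
  norm_num

lemma min_div_rpow_pow_le (t k : ℕ) :
    min ((2 : ℝ) ^ k) (4 ^ k / t) / (2 ^ γ) ^ k ≤ (2 ^ (1 - γ)) ^ k := by
  rw [← two_pow_div_rpow_pow]
  exact div_le_div_of_nonneg_right (min_le_left _ _) (by positivity)

lemma summable_min_div_rpow_pow (hγ : 1 < γ) (t : ℕ) :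
    Summable fun k : ℕ => min ((2 : ℝ) ^ k) (4 ^ k / t) / (2 ^ γ) ^ k :=
  (summable_geometric_of_lt_one (by positivity)
      (Real.rpow_lt_one_of_one_lt_of_neg one_lt_two (by linarith))).of_nonneg_of_le
    (fun k => by positivity) (min_div_rpow_pow_le t)

lemma exists_tsum_min_div_rpow_pow_le (hγ : 1 < γ) (hγ' : γ < 2) :
    ∃ c, ∀ t : ℕ, 1 ≤ t →
      ∑' k : ℕ, min ((2 : ℝ) ^ k) (4 ^ k / t) / (2 ^ γ) ^ k ≤ c * (t : ℝ) ^ (1 - γ) := by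
  set r : ℝ := 2 ^ (1 - γ)
  set s : ℝ := 2 ^ (2 - γ)
  have hr1 : r < 1 := Real.rpow_lt_one_of_one_lt_of_neg one_lt_two (by linarith)
  have hs1 : 1 < s := Real.one_lt_rpow one_lt_two (by linarith)
  have hs2 : s ≤ 2 :=
    (Real.rpow_le_rpow_of_exponent_le one_le_two (by linarith : 2 - γ ≤ 1)).trans_eq
      (Real.rpow_one 2)
  refine ⟨2 / (s - 1) + 1 / (1 - r), fun t ht => ?_⟩
  have ht0 : (0 : ℝ) < t := by exact_mod_cast ht
  set K := Nat.log 2 t + 1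
  have hKlow : (t : ℝ) < 2 ^ K := by exact_mod_cast Nat.lt_pow_succ_log_self one_lt_two t
  have hKhigh : (2 : ℝ) ^ K ≤ 2 * t := by
    rw [pow_succ, mul_comm]
    exact_mod_cast Nat.mul_le_mul_left 2 (Nat.pow_log_le_self 2 (by omega))
  have hrK : r ^ K ≤ (t : ℝ) ^ (1 - γ) := by
    rw [Real.rpow_pow_comm zero_le_two]
    exact Real.rpow_le_rpow_of_nonpos ht0 hKlow.le (by linarith)
  have hsK : (t : ℝ)⁻¹ * s ^ K ≤ 2 * (t : ℝ) ^ (1 - γ) :=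
    calc (t : ℝ)⁻¹ * s ^ K = (t : ℝ)⁻¹ * ((2 : ℝ) ^ K) ^ (2 - γ) := by
          rw [Real.rpow_pow_comm zero_le_two]
      _ ≤ (t : ℝ)⁻¹ * (2 * t) ^ (2 - γ) := by gcongr
      _ = s * (t : ℝ) ^ (1 - γ) := by
          rw [Real.mul_rpow zero_le_two ht0.le, mul_left_comm, ← Real.rpow_neg_one,
            ← Real.rpow_add ht0]
          congr 2
          ring
      _ ≤ 2 * (t : ℝ) ^ (1 - γ) := by gcongr
  have hhead : ∀ k < K, min ((2 : ℝ) ^ k) (4 ^ k / t) / (2 ^ γ) ^ k ≤ (t : ℝ)⁻¹ * s ^ k :=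
    fun k _ => calc
      _ ≤ ((4 : ℝ) ^ k / t) / (2 ^ γ) ^ k :=
        div_le_div_of_nonneg_right (min_le_right _ _) (by positivity)
      _ = (t : ℝ)⁻¹ * s ^ k := by rw [← four_pow_div_rpow_pow]; ring
  calc _ ≤ (t : ℝ)⁻¹ * s ^ K / (s - 1) + 1 * r ^ K / (1 - r) :=
        tsum_le_of_le_geometric K (summable_min_div_rpow_pow hγ t) (by positivity)
          (by positivity) hr1 hs1 hhead
          (fun k _ => (min_div_rpow_pow_le t k).trans_eq (one_mul _).symm)
    _ ≤ 2 * (t : ℝ) ^ (1 - γ) / (s - 1) + (t : ℝ) ^ (1 - γ) / (1 - r) := by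
        rw [one_mul]
        gcongr
    _ = (2 / (s - 1) + 1 / (1 - r)) * (t : ℝ) ^ (1 - γ) := by ring

end DyadicSeries

lemma setIntegral_remainderKernel_le {e : Measure ℝ} [IsFiniteMeasure e] {D γ : ℝ} (hγ : 1 < γ)
    (hD : ∀ μ : ℝ, 0 < μ → (e (Ioc 0 μ)).toReal ≤ D * μ ^ γ) (t : ℕ) :
    ∫ l in Ioc 0 2, remainderKernel t l ∂e ≤
      2 * D * 2 ^ γ * ∑' k : ℕ, min ((2 : ℝ) ^ k) (4 ^ k / t) / (2 ^ γ) ^ k := by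
  have hD0 : 0 ≤ D := by simpa using ENNReal.toReal_nonneg.trans (hD 1 one_pos)
  have hshell : ∀ k : ℕ, e (Ioc (2 / 2 ^ (k + 1)) (2 / 2 ^ k)) ≤
      ENNReal.ofReal (D * 2 ^ γ / (2 ^ γ) ^ k) := fun k => by
    refine (measure_mono (Ioc_subset_Ioc_left (by positivity))).trans ?_
    rw [← ENNReal.ofReal_toReal (measure_ne_top e _)]
    refine ENNReal.ofReal_le_ofReal ((hD _ (by positivity)).trans_eq ?_)
    rw [Real.div_rpow zero_le_two (by positivity), ← Real.rpow_pow_comm zero_le_two, mul_div_assoc]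
  have hsum := (summable_min_div_rpow_pow hγ t).mul_left (2 * D * 2 ^ γ)
  calc _ ≤ ∑' k : ℕ, 2 * min ((2 : ℝ) ^ k) (4 ^ k / t) * (D * 2 ^ γ / (2 ^ γ) ^ k) :=
        setIntegral_Ioc_zero_le_tsum_of_dyadic (fun k => by positivity) (fun k => by positivity)
          (hsum.congr fun k => by ring) (fun k l hl => ?_) hshell
    _ = _ := by rw [← tsum_mul_left]; exact tsum_congr fun k => by ring
  have hl0 : 0 ≤ l := (by positivity : (0 : ℝ) ≤ 2 / 2 ^ (k + 1)).trans hl.1.le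
  have hl2 : l ≤ 2 := hl.2.trans (div_le_self zero_le_two (one_le_pow₀ one_le_two))
  rw [Real.norm_of_nonneg (remainderKernel.nonneg hl0 hl2)]
  exact remainderKernel.le_of_mem_dyadic hl

theorem stmt_5_general (e : Measure ℝ) [IsFiniteMeasure e] (C γ : ℝ)
    (hγ : 1 < γ) (hγ' : γ < 2)
    (hbound : ∀ μ : ℝ, 0 < μ → μ ≤ 1 → (e (Ioc 0 μ)).toReal ≤ C * μ ^ γ) :
    ∃ C' : ℝ, ∀ t : ℕ, 2 ≤ t →
      (∫ l in Ioc (0:ℝ) 2, (1 - (1 - l) ^ t) / (l ^ 2 * t) ∂e) ≤ C' * (t : ℝ) ^ (1 - γ) := by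
  obtain ⟨c, hc⟩ := exists_tsum_min_div_rpow_pow_le hγ hγ'
  set D := max C (e univ).toReal
  have hD0 : 0 ≤ D := le_max_of_le_right ENNReal.toReal_nonneg
  refine ⟨2 * D * 2 ^ γ * c, fun t ht => ?_⟩
  calc ∫ l in Ioc 0 2, remainderKernel t l ∂e
      ≤ 2 * D * 2 ^ γ * ∑' k : ℕ, min ((2 : ℝ) ^ k) (4 ^ k / t) / (2 ^ γ) ^ k :=
        setIntegral_remainderKernel_le hγ
          (fun μ hμ => toReal_measure_Ioc_zero_le_max (by linarith) hbound hμ) t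
    _ ≤ 2 * D * 2 ^ γ * (c * (t : ℝ) ^ (1 - γ)) := by gcongr; exact hc t (by omega)
    _ = 2 * D * 2 ^ γ * c * (t : ℝ) ^ (1 - γ) := by ring

theorem stmt_5 (e : Measure ℝ) [IsFiniteMeasure e] (C γ : ℝ) (hC : 0 < C)
    (hγ : 1 < γ) (hγ' : γ < 2) (h0 : e {0} = 0)
    (hsupp : e (Ioi (2:ℝ)) = 0) (hneg : e (Iio (0:ℝ)) = 0)
    (hbound : ∀ μ : ℝ, 0 < μ → μ ≤ 1 → (e (Ioc 0 μ)).toReal ≤ C * μ ^ γ) :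
    ∃ C' : ℝ, ∀ t : ℕ, 2 ≤ t →
      (∫ l in Ioc (0:ℝ) 2, (1 - (1 - l) ^ t) / (l ^ 2 * t) ∂e) ≤ C' * (t : ℝ) ^ (1 - γ) :=
  stmt_5_general e C γ hγ hγ' hbound
end

section
/- For $\lambda \in [0,1]$ and $t \in \mathbb{N}$, one has $(1-\lambda)^{2t} \le e^{-2\lambda t}$, and consequently, for any finite nonnegative Borel measure $e$ on $[0,1]$ with $e(\{0\})=0$ satisfying $e([0,\mu]) \le C\mu^2\log^q(e+\mu^{-1})$ for $\mu \in (0,1]$, one has $\int_{[0,1]} (1-\lambda)^{2t}\,\mathrm{d}e(\lambda) = O(t^{-2}\log^q t)$ as $t \to \infty$. -/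
/-!
Pointwise, `(1 - λ) ^ (2t) ≤ exp (-2λt)`. Cut `[0, 1]` into `[0, 1/t]` and the dyadic shells
`[2^k/t, 2^(k+1)/t)`. On `[0, 1/t]` the integrand is at most `1` and the mass at most
`C t⁻² log^q (e + t)`; on the `k`-th shell the integrand is at most `exp (-2^(k+1))` and the mass
at most `4^(k+1)` times that, so `x² e^(-x) ≤ 6 / x` makes the shell contributions geometric.
-/

open MeasureTheory Set Real
open scoped ENNReal

theorem one_sub_pow_le_exp_neg_mul {l : ℝ} (hl : l ≤ 1) (n : ℕ) :
    (1 - l) ^ n ≤ exp (-(l * n)) := by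
  calc (1 - l) ^ n ≤ exp (-l) ^ n :=
        pow_le_pow_left₀ (sub_nonneg.2 hl) (by linarith [add_one_le_exp (-l)]) n
    _ = exp (-(l * n)) := by rw [← exp_nat_mul]; ring_nf

theorem sq_mul_exp_neg_le {x : ℝ} (hx : 0 < x) : x ^ 2 * exp (-x) ≤ 6 / x := by
  have h : x ^ 3 / 6 ≤ exp x := by
    simpa [Nat.factorial] using pow_div_factorial_le_exp x hx.le 3
  rw [exp_neg, le_div_iff₀ hx, ← div_eq_mul_inv, div_mul_eq_mul_div, div_le_iff₀ (exp_pos x)]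
  linarith

theorem setLIntegral_Icc_le_dyadic (ν : Measure ℝ) {f : ℝ → ℝ≥0∞} {δ : ℝ} (hδ : 0 < δ)
    (a : ℕ → ℝ≥0∞) (hf : ∀ x ∈ Icc (0 : ℝ) 1, f x ≤ 1)
    (ha : ∀ k : ℕ, ∀ x ∈ Icc (0 : ℝ) 1, 2 ^ k * δ ≤ x → f x ≤ a k) :
    ∫⁻ x in Icc 0 1, f x ∂ν ≤
      ν (Icc 0 δ) + ∑' k : ℕ, a k * ν (Icc 0 (min (2 ^ (k + 1) * δ) 1)) := by
  set shell : ℕ → Set ℝ := fun k => Ico (2 ^ k * δ) (2 ^ (k + 1) * δ) ∩ Icc 0 1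
  have hcover : Icc (0 : ℝ) 1 ⊆ (Icc 0 δ ∩ Icc 0 1) ∪ ⋃ k, shell k := by
    intro x hx
    rcases le_or_gt x δ with hxδ | hδx
    · exact Or.inl ⟨⟨hx.1, hxδ⟩, hx⟩
    · obtain ⟨k, hk, hk'⟩ := exists_nat_pow_near ((one_le_div hδ).2 hδx.le) one_lt_two
      refine Or.inr (mem_iUnion.2 ⟨k, ⟨?_, ?_⟩, hx⟩)
      · rwa [← le_div_iff₀ hδ]
      · rwa [← div_lt_iff₀ hδ]
  have hshell : ∀ k, ∫⁻ x in shell k, f x ∂ν ≤ a k * ν (Icc 0 (min (2 ^ (k + 1) * δ) 1)) :=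
    fun k => calc
      ∫⁻ x in shell k, f x ∂ν ≤ ∫⁻ _ in shell k, a k ∂ν :=
        setLIntegral_mono measurable_const fun x hx => ha k x hx.2 hx.1.1
      _ ≤ a k * ν (Icc 0 (min (2 ^ (k + 1) * δ) 1)) := by
        rw [setLIntegral_const]
        gcongr
        exact fun x hx => ⟨hx.2.1, le_min hx.1.2.le hx.2.2⟩
  calc ∫⁻ x in Icc 0 1, f x ∂ν
      ≤ ∫⁻ x in Icc 0 δ ∩ Icc 0 1, f x ∂ν + ∫⁻ x in ⋃ k, shell k, f x ∂ν :=
        (lintegral_mono_set hcover).trans (lintegral_union_le _ _ _)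
    _ ≤ ∫⁻ _ in Icc 0 δ ∩ Icc 0 1, 1 ∂ν + ∑' k, ∫⁻ x in shell k, f x ∂ν := by
        gcongr ?_ + ?_
        · exact setLIntegral_mono measurable_const fun x hx => hf x hx.2
        · exact lintegral_iUnion_le _ _
    _ ≤ ν (Icc 0 δ) + ∑' k : ℕ, a k * ν (Icc 0 (min (2 ^ (k + 1) * δ) 1)) := by
        rw [setLIntegral_one]
        exact add_le_add (measure_mono inter_subset_left) (ENNReal.tsum_le_tsum hshell)

theorem measure_Icc_min_le_of_growth {ν : Measure ℝ} [IsFiniteMeasure ν] {C q T b : ℝ}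
    (hC : 0 ≤ C) (hq : 0 ≤ q) (hT : 1 ≤ T) (hb : T⁻¹ ≤ b)
    (hν : ∀ μ : ℝ, 0 < μ → μ ≤ 1 →
      (ν (Icc 0 μ)).toReal ≤ C * μ ^ 2 * log (exp 1 + μ⁻¹) ^ q) :
    ν (Icc 0 (min b 1)) ≤ ENNReal.ofReal (C * b ^ 2 * log (exp 1 + T) ^ q) := by
  have hTμ : T⁻¹ ≤ min b 1 := le_min hb (inv_le_one_of_one_le₀ hT)
  have hμ : 0 < min b 1 := (inv_pos.2 (zero_lt_one.trans_le hT)).trans_le hTμ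
  have hμT : (min b 1)⁻¹ ≤ T := by
    simpa using inv_anti₀ (inv_pos.2 (zero_lt_one.trans_le hT)) hTμ
  have hlog : 0 ≤ log (exp 1 + (min b 1)⁻¹) :=
    log_nonneg (by linarith [add_one_le_exp 1, inv_pos.2 hμ])
  have hlogT : log (exp 1 + (min b 1)⁻¹) ≤ log (exp 1 + T) :=
    log_le_log (by positivity) (by gcongr)
  rw [ENNReal.le_ofReal_iff_toReal_le (measure_ne_top _ _)
    (by have := hlog.trans hlogT; positivity)]
  refine (hν _ hμ (min_le_right _ _)).trans ?_
  gcongr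
  exact min_le_left _ _

theorem one_sub_pow_two_mul_le_exp_neg_two_pow {t k : ℕ} (ht : 0 < t) {x : ℝ} (hx : x ≤ 1)
    (hkx : 2 ^ k * (t : ℝ)⁻¹ ≤ x) : (1 - x) ^ (2 * t) ≤ exp (-2 ^ (k + 1)) := by
  refine (one_sub_pow_le_exp_neg_mul hx _).trans ?_
  rw [exp_le_exp, neg_le_neg_iff, pow_succ, Nat.cast_mul, Nat.cast_two]
  calc 2 ^ k * 2 = 2 ^ k * (t : ℝ)⁻¹ * (2 * t) := by field_simp
    _ ≤ x * (2 * t) := by gcongr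

theorem setLIntegral_one_sub_pow_le {ν : Measure ℝ} [IsFiniteMeasure ν] {C q : ℝ}
    (hC : 0 ≤ C) (hq : 0 ≤ q)
    (hν : ∀ μ : ℝ, 0 < μ → μ ≤ 1 →
      (ν (Icc 0 μ)).toReal ≤ C * μ ^ 2 * log (exp 1 + μ⁻¹) ^ q)
    {t : ℕ} (ht : 0 < t) :
    ∫⁻ l in Icc 0 1, ENNReal.ofReal ((1 - l) ^ (2 * t)) ∂ν ≤
      ENNReal.ofReal (7 * (C * (t : ℝ)⁻¹ ^ 2 * log (exp 1 + t) ^ q)) := by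
  have hT : (1 : ℝ) ≤ t := by exact_mod_cast ht
  set δ : ℝ := (t : ℝ)⁻¹
  set c : ℝ := C * δ ^ 2 * log (exp 1 + t) ^ q with hc_def
  have hδ : 0 < δ := by positivity
  have hc : 0 ≤ c := by
    have : 0 ≤ log (exp 1 + t) := log_nonneg (by linarith [add_one_le_exp 1])
    positivity
  -- `6c / 2 / 2^k` is the shape summed by `tsum_geometric_two'`.
  have hshell : ∀ k : ℕ, ENNReal.ofReal (exp (-2 ^ (k + 1))) *
      ν (Icc 0 (min (2 ^ (k + 1) * δ) 1)) ≤ ENNReal.ofReal (6 * c / 2 / 2 ^ k) := by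
    intro k
    have hx : (0 : ℝ) < 2 ^ (k + 1) := by positivity
    have hb : δ ≤ 2 ^ (k + 1) * δ := le_mul_of_one_le_left hδ.le (one_le_pow₀ one_le_two)
    calc _ ≤ ENNReal.ofReal (exp (-2 ^ (k + 1))) *
          ENNReal.ofReal (C * (2 ^ (k + 1) * δ) ^ 2 * log (exp 1 + t) ^ q) := by
          gcongr
          exact measure_Icc_min_le_of_growth hC hq hT hb hν
      _ = ENNReal.ofReal (c * ((2 ^ (k + 1)) ^ 2 * exp (-2 ^ (k + 1)))) := by
          rw [← ENNReal.ofReal_mul (exp_nonneg _), hc_def]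
          ring_nf
      _ ≤ ENNReal.ofReal (6 * c / 2 / 2 ^ k) := by
          gcongr
          calc c * ((2 ^ (k + 1)) ^ 2 * exp (-2 ^ (k + 1)))
              ≤ c * (6 / 2 ^ (k + 1)) := by gcongr; exact sq_mul_exp_neg_le hx
            _ = 6 * c / 2 / 2 ^ k := by rw [pow_succ]; ring
  calc ∫⁻ l in Icc 0 1, ENNReal.ofReal ((1 - l) ^ (2 * t)) ∂ν
      ≤ ν (Icc 0 δ) + ∑' k : ℕ, ENNReal.ofReal (exp (-2 ^ (k + 1))) *
          ν (Icc 0 (min (2 ^ (k + 1) * δ) 1)) :=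
        setLIntegral_Icc_le_dyadic ν hδ _
          (fun x hx => ENNReal.ofReal_le_one.2
            (pow_le_one₀ (sub_nonneg.2 hx.2) (by linarith [hx.1])))
          fun k x hx hkx => ENNReal.ofReal_le_ofReal
            (one_sub_pow_two_mul_le_exp_neg_two_pow ht hx.2 hkx)
    _ ≤ ENNReal.ofReal c + ∑' k : ℕ, ENNReal.ofReal (6 * c / 2 / 2 ^ k) := by
        gcongr with k
        · have h := measure_Icc_min_le_of_growth hC hq hT le_rfl hν
          rwa [min_eq_left (inv_le_one_of_one_le₀ hT)] at h
        · exact hshell k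
    _ = ENNReal.ofReal (7 * c) := by
        rw [← ENNReal.ofReal_tsum_of_nonneg (fun k => by positivity) (summable_geometric_two' _),
          tsum_geometric_two', ← ENNReal.ofReal_add hc (by positivity)]
        ring_nf

theorem log_exp_one_add_le_two_mul_log {T : ℝ} (hT : 3 ≤ T) : log (exp 1 + T) ≤ 2 * log T :=
  calc log (exp 1 + T) ≤ log (T ^ 2) :=
        log_le_log (by positivity) (by nlinarith [exp_one_lt_d9])
    _ = 2 * log T := by rw [log_pow]; norm_num

theorem stmt_18 :
    (∀ l : ℝ, l ∈ Icc (0:ℝ) 1 → ∀ t : ℕ, (1 - l) ^ (2 * t) ≤ Real.exp (-(2 * l * t))) ∧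
    (∀ (ν : Measure ℝ), IsFiniteMeasure ν → ν {0} = 0 → ν (Iio (0:ℝ)) = 0 →
      ν (Ioi (1:ℝ)) = 0 →
      ∀ (C q : ℝ), 0 < C → 0 ≤ q →
      (∀ μ : ℝ, 0 < μ → μ ≤ 1 →
        (ν (Icc 0 μ)).toReal ≤ C * μ ^ 2 * (Real.log (Real.exp 1 + μ⁻¹)) ^ q) →
      ∃ C' : ℝ, ∃ t₀ : ℕ, ∀ t : ℕ, t₀ ≤ t →
        (∫ l in Icc (0:ℝ) 1, (1 - l) ^ (2 * t) ∂ν) ≤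
          C' * (t : ℝ)⁻¹ ^ 2 * (Real.log t) ^ q) := by
  refine ⟨fun l hl t => ?_, ?_⟩
  · convert one_sub_pow_le_exp_neg_mul hl.2 (2 * t) using 3
    push_cast
    ring
  · intro ν _ _ _ _ C q hC hq hν
    refine ⟨7 * C * 2 ^ q, 3, fun t ht => ?_⟩
    have hT : (3 : ℝ) ≤ t := by exact_mod_cast ht
    have hlog : 0 ≤ log (exp 1 + t) := log_nonneg (by linarith [add_one_le_exp 1])
    calc ∫ l in Icc 0 1, (1 - l) ^ (2 * t) ∂ν
        ≤ 7 * (C * (t : ℝ)⁻¹ ^ 2 * log (exp 1 + t) ^ q) := by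
          rw [integral_eq_lintegral_of_nonneg_ae
            (ae_of_all _ fun l => (even_two_mul t).pow_nonneg _) (by fun_prop)]
          exact ENNReal.toReal_le_of_le_ofReal (by positivity)
            (setLIntegral_one_sub_pow_le hC.le hq hν (by omega))
      _ ≤ 7 * (C * (t : ℝ)⁻¹ ^ 2 * (2 * log t) ^ q) := by
          gcongr
          exact log_exp_one_add_le_two_mul_log hT
      _ = 7 * C * 2 ^ q * (t : ℝ)⁻¹ ^ 2 * log t ^ q := by
          rw [mul_rpow zero_le_two (log_nonneg (by linarith))]
          ring
end
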